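/- The Laurent polynomial f₁ = x + y + z + 1/(xyz) is transformed, by first rewriting it under a GL(3,ℤ) monomial substitution as f₁′ = z(x+1) + y + 1/(xyz²) and then applying the cluster-type change z(x+1) ↦ z, into a Laurent polynomial equal up to toric change of variables to f₃ = (x+1)²/(xyz) + y/z + z. -/

import Mathlib

set_option maxHeartbeats 1000000
set_option synthInstance.maxHeartbeats 400000


/-- The field `ℂ(x,y,z)` of rational functions in three variables. -/
abbrev K3 := FractionRing (MvPolynomial (Fin 3) ℂ)

/-- The coordinate functions `x, y, z` in `ℂ(x,y,z)`. -/
noncomputable def Xv (i : Fin 3) : K3 := algebraMap (MvPolynomial (Fin 3) ℂ) K3 (MvPolynomial.X i)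

/-- The monomial in `x, y, z` with exponent vector given by the `i`-th row of an
integer matrix `M`; substituting these monomials for the variables is the toric change
of variables attached to `M ∈ GL(3,ℤ)`. -/
noncomputable def toricMono (M : Matrix (Fin 3) (Fin 3) ℤ) (i : Fin 3) : K3 :=
  Xv 0 ^ M i 0 * Xv 1 ^ M i 1 * Xv 2 ^ M i 2

/-- `f₁ = x + y + z + 1/(xyz)`, the standard weak LG model of `ℙ³`. -/
noncomputable def F₁ (x y z : K3) : K3 := x + y + z + 1 / (x * y * z)

/-- `g`: the result of substituting `z ↦ z/(x+1)` into `f₁′ = z(x+1) + y + 1/(xyz²)`. -/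
noncomputable def Gsub (x y z : K3) : K3 :=
  (z / (x + 1)) * (x + 1) + y + 1 / (x * y * (z / (x + 1)) ^ 2)

/-- `f₃ = (x+1)²/(xyz) + y/z + z`. -/
noncomputable def F₃ (x y z : K3) : K3 := (x + 1) ^ 2 / (x * y * z) + y / z + z

lemma algMap_ne {p : MvPolynomial (Fin 3) ℂ} (h : p ≠ 0) :
    algebraMap (MvPolynomial (Fin 3) ℂ) K3 p ≠ 0 := by
  simpa using (IsFractionRing.injective (MvPolynomial (Fin 3) ℂ) K3).ne h

lemma Xv_ne (i : Fin 3) : Xv i ≠ 0 := algMap_ne (MvPolynomial.X_ne_zero i)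

lemma Xv0_add_one_ne : Xv 0 + 1 ≠ 0 := by
  have : Xv 0 + 1 = algebraMap (MvPolynomial (Fin 3) ℂ) K3 (MvPolynomial.X 0 + 1) := by
    simp [Xv, map_add, map_one]
  rw [this]
  apply algMap_ne
  intro h
  have := congrArg MvPolynomial.constantCoeff h
  simp at this

/-- there is a `GL(3,ℤ)` monomial substitution `σ` with
`σ(f₁) = z(x+1) + y + 1/(xyz²)`, and after the cluster-type change of variables
`z ↦ z/(x+1)` the result `g` satisfies `τ(g) = f₃` for a further `GL(3,ℤ)` monomial
substitution `τ`. -/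
theorem p3_cluster_transformation :
    (∃ M : Matrix (Fin 3) (Fin 3) ℤ, IsUnit M.det ∧
        F₁ (toricMono M 0) (toricMono M 1) (toricMono M 2) =
          Xv 2 * (Xv 0 + 1) + Xv 1 + 1 / (Xv 0 * Xv 1 * Xv 2 ^ 2)) ∧
      ∃ N : Matrix (Fin 3) (Fin 3) ℤ, IsUnit N.det ∧
        Gsub (toricMono N 0) (toricMono N 1) (toricMono N 2) =
          F₃ (Xv 0) (Xv 1) (Xv 2) := by
  have hx := Xv_ne 0
  have hy := Xv_ne 1
  have hz := Xv_ne 2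
  have hx1 := Xv0_add_one_ne
  constructor
  · refine ⟨!![1,0,1; 0,1,0; 0,0,1], by simp [Matrix.det_fin_three, Matrix.vecHead, Matrix.vecTail], ?_⟩
    simp only [F₁, toricMono, Matrix.cons_val', Matrix.cons_val_zero, Matrix.cons_val_one,
      Matrix.head_cons, Matrix.head_fin_const, Matrix.empty_val', Matrix.cons_val_fin_one,
      Matrix.of_apply, Matrix.cons_val_succ, Matrix.cons_val_two, Matrix.tail_cons, Matrix.vecHead, Matrix.vecTail, Function.comp_apply, Fin.isValue, zpow_one, zpow_zero, one_mul, mul_one]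
    field_simp
    ring
  · refine ⟨!![1,0,0; 0,1,-1; 0,0,1], by simp [Matrix.det_fin_three, Matrix.vecHead, Matrix.vecTail], ?_⟩
    simp only [Gsub, F₃, toricMono, Matrix.cons_val', Matrix.cons_val_zero, Matrix.cons_val_one,
      Matrix.head_cons, Matrix.head_fin_const, Matrix.empty_val', Matrix.cons_val_fin_one,
      Matrix.of_apply, Matrix.cons_val_succ, Matrix.cons_val_two, Matrix.tail_cons, Matrix.vecHead, Matrix.vecTail, Function.comp_apply, Fin.isValue, zpow_one, zpow_zero, zpow_neg, one_mul, mul_one]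
    field_simp
    ring
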